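/- Let F_m be the free group on x_1,…,x_m, with l(w) the reduced-word length of w, and let u_1,…,u_n ∈ {x_1,…,x_m}. Suppose t = (t_1,…,t_n) ∈ F_m^n is such that each t_k is conjugate to some generator x_{i_k} ∈ {x_1,…,x_m}, t_1 t_2 ⋯ t_n = u_1 u_2 ⋯ u_n, and l(t_1) + ⋯ + l(t_n) > n. Then there exist an index j with 1 ≤ j ≤ n-1 and ε ∈ {1, -1} such that the Hurwitz translate σ_j^ε · t satisfies l((σ_j^ε · t)_1) + ⋯ + l((σ_j^ε · t)_n) < l(t_1) + ⋯ + l(t_n). -/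

import Mathlib

/-- Defining relations of the braid group on `n` strands: the Artin generators are
`σ_0, …, σ_{n-2}` (`0`-based), indexed by `Fin (n-1)`. -/
def braidRels (n : ℕ) : Set (FreeGroup (Fin (n - 1))) :=
  {r | ∃ i j : Fin (n - 1),
    (((j : ℕ) = (i : ℕ) + 1) ∧
      r = FreeGroup.of i * FreeGroup.of j * FreeGroup.of i *
        (FreeGroup.of j * FreeGroup.of i * FreeGroup.of j)⁻¹) ∨
    (((i : ℕ) + 2 ≤ (j : ℕ)) ∧
      r = FreeGroup.of i * FreeGroup.of j * (FreeGroup.of j * FreeGroup.of i)⁻¹)}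

/-- The braid group on `n` strands, as a presented group. -/
abbrev BraidGroup (n : ℕ) := PresentedGroup (braidRels n)

/-- The Artin generator `σ_i` of the braid group (`0`-based index `i : Fin (n-1)`). -/
def braidGen {n : ℕ} (i : Fin (n - 1)) : BraidGroup n := PresentedGroup.of i

/-- The Artin generator `σ_k` for a natural number index `k` (`0`-based);
equal to `1` if `k` is out of range. -/
def braidGen' (n k : ℕ) : BraidGroup n :=
  if h : k < n - 1 then braidGen ⟨k, h⟩ else 1

/-- The Birman–Ko–Lee generator `a_{ij}` (`0`-based): for `i < j`,
`a_{ij} = σ_i σ_{i+1} ⋯ σ_{j-2} σ_{j-1} σ_{j-2}⁻¹ ⋯ σ_{i+1}⁻¹ σ_i⁻¹`. -/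
def bkl (n i j : ℕ) : BraidGroup n :=
  (((List.range (j - 1 - i)).map fun t => braidGen' n (i + t)).prod) *
    braidGen' n (j - 1) *
    (((List.range (j - 1 - i)).map fun t => braidGen' n (i + t)).prod)⁻¹

/-- The strand index `i` as an element of `Fin n` (from `i : Fin (n-1)`). -/
def finLo {n : ℕ} (i : Fin (n - 1)) : Fin n := ⟨i, by have := i.isLt; omega⟩

/-- The strand index `i+1` as an element of `Fin n` (from `i : Fin (n-1)`). -/
def finHi {n : ℕ} (i : Fin (n - 1)) : Fin n := ⟨(i : ℕ) + 1, by have := i.isLt; omega⟩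

/-- The Hurwitz move corresponding to the braid generator `σ_i`:
`σ_i · (g_1,…,g_n) = (g_1,…,g_{i-1}, g_{i+1}, g_{i+1}⁻¹ g_i g_{i+1}, g_{i+2},…,g_n)`. -/
def hurwitzMove {G : Type*} [Group G] {n : ℕ} (i : Fin (n - 1)) (g : Fin n → G) :
    Fin n → G := fun k =>
  if k = finLo i then g (finHi i)
  else if k = finHi i then (g (finHi i))⁻¹ * g (finLo i) * g (finHi i)
  else g k


/-!
Write each `t_k` as a reduced word `P_k x_k P_k⁻¹`. A move `σ_j` shortens `t` as soon as
`P_j = P_{j+1} x_{j+1} R`, and `σ_j⁻¹` does as soon as `P_{j+1} = P_j x_j⁻¹ S`. If neither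
happens at any `j`, then in `t_1 ⋯ t_k` the central letters `x_i` never cancel: the reduced word
of `t_1 ⋯ t_k` ends in `x_k P_k⁻¹` and has length at least `k - 1 + l(t_i)` for every `i ≤ k`.
For `k = n` this length is `l(u_1 ⋯ u_n) ≤ n`, so every `t_i` is a single letter and
`l(t_1) + ⋯ + l(t_n) = n`.
-/

namespace FreeGroup

variable {α : Type*}

theorem IsReduced.invRev {L : List (α × Bool)} (h : IsReduced L) : IsReduced (invRev L) := by
  simp only [IsReduced, FreeGroup.invRev, List.isChain_reverse, List.isChain_map] at h ⊢
  exact h.imp fun a b hab hba => by simpa using (hab hba.symm).symm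

theorem mk_append_cons (M L : List (α × Bool)) (x : α) :
    mk (M ++ (x, true) :: L) = mk M * of x * mk L := by
  rw [of, mul_mk, mul_mk, List.append_assoc, List.singleton_append]

theorem mk_append_cons_invRev (P : List (α × Bool)) (x : α) :
    mk (P ++ (x, true) :: invRev P) = mk P * of x * (mk P)⁻¹ := by
  rw [mk_append_cons, inv_mk]

variable [DecidableEq α]

theorem IsReduced.toWord_mk {L : List (α × Bool)} (h : IsReduced L) : (mk L).toWord = L := by
  rw [FreeGroup.toWord_mk, h.reduce_eq]

theorem IsReduced.norm_mk {L : List (α × Bool)} (h : IsReduced L) : (mk L).norm = L.length := by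
  rw [norm, h.toWord_mk]

theorem norm_conj_of_le (c : FreeGroup α) (x : α) : (c * of x * c⁻¹).norm ≤ 2 * c.norm + 1 := by
  have := norm_mul_le (c * of x) c⁻¹
  have := norm_mul_le c (of x)
  rw [norm_inv_eq, norm_of] at *
  omega

theorem norm_le_add_norm_inv_mul (a b : FreeGroup α) :
    b.norm ≤ a.norm + (a⁻¹ * b).norm ∧ a.norm ≤ b.norm + (a⁻¹ * b).norm := by
  constructor
  · simpa using norm_mul_le a (a⁻¹ * b)
  · have := norm_mul_le b (a⁻¹ * b)⁻¹
    rwa [norm_inv_eq, mul_inv_rev, inv_inv, mul_inv_cancel_left] at this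

theorem exists_toWord_conj_of_isReduced (s : α) {L : List (α × Bool)} (hL : IsReduced L) :
    ∃ P, (mk L * of s * (mk L)⁻¹).toWord = P ++ (s, true) :: invRev P := by
  induction L using List.reverseRecOn with
  | nil => exact ⟨[], by simp [← one_eq_mk, toWord_of, invRev]⟩
  | append_singleton L a ih =>
    obtain ⟨b, e⟩ := a
    by_cases hb : b = s
    · subst hb
      have hcomm : mk [(b, e)] * of b * (mk [(b, e)])⁻¹ = of b := by
        cases e
        · rw [show mk [(b, false)] = (of b)⁻¹ from (inv_mk (L := [(b, true)])).symm]; group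
        · rw [show mk [(b, true)] = of b from rfl]; group
      obtain ⟨P, hP⟩ := ih (hL.infix ⟨[], [(b, e)], by simp⟩)
      refine ⟨P, ?_⟩
      rw [← hP, ← mul_mk]
      calc (mk L * mk [(b, e)] * of b * (mk L * mk [(b, e)])⁻¹).toWord
          = (mk L * (mk [(b, e)] * of b * (mk [(b, e)])⁻¹) * (mk L)⁻¹).toWord := by group
        _ = _ := by rw [hcomm]
    · refine ⟨L ++ [(b, e)], ?_⟩
      rw [← mk_append_cons_invRev]
      apply IsReduced.toWord_mk
      have h₁ : IsReduced ([(b, e)] ++ [(s, true)]) := by simp [hb]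
      have h₂ : IsReduced ([(s, true)] ++ [(b, !e)]) := by simp [Ne.symm hb]
      have h₃ : IsReduced ([(b, !e)] ++ invRev L) := by
        simpa [FreeGroup.invRev] using hL.invRev
      have := (hL.append_overlap h₁ (by simp)).append_overlap h₂ (by simp)
      simpa [FreeGroup.invRev] using this.append_overlap h₃ (by simp)

theorem exists_toWord_eq_of_isConj {s : α} {g : FreeGroup α} (h : IsConj (of s) g) :
    ∃ P, g.toWord = P ++ (s, true) :: invRev P := by
  obtain ⟨c, rfl⟩ := isConj_iff.mp h
  simpa only [mk_toWord] using exists_toWord_conj_of_isReduced s (isReduced_toWord (x := c))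

section ConjugateOfGenerator

variable {a b : FreeGroup α} {P Q : List (α × Bool)} {x y : α}

theorem eq_conj_of_toWord_eq (ha : a.toWord = P ++ (x, true) :: invRev P) :
    a = mk P * of x * (mk P)⁻¹ := by
  rw [← mk_toWord (x := a), ha, mk_append_cons_invRev]

theorem norm_eq_of_toWord_eq (ha : a.toWord = P ++ (x, true) :: invRev P) :
    a.norm = 2 * P.length + 1 := by
  rw [norm, ha]
  simp [invRev_length]
  ring

theorem norm_inv_mul_mul_lt {R : List (α × Bool)} (ha : a.toWord = P ++ (x, true) :: invRev P)
    (hb : b.toWord = Q ++ (y, true) :: invRev Q) (hP : P = Q ++ (y, true) :: R) :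
    (b⁻¹ * a * b).norm < a.norm := by
  have hmk : mk P = mk Q * of y * mk R := by rw [hP, mk_append_cons]
  have hconj : b⁻¹ * a * b = mk (Q ++ R) * of x * (mk (Q ++ R))⁻¹ := by
    rw [eq_conj_of_toWord_eq ha, eq_conj_of_toWord_eq hb, hmk, ← mul_mk]
    group
  have := norm_conj_of_le (mk (Q ++ R)) x
  have := norm_mk_le (L₁ := Q ++ R)
  rw [hconj, norm_eq_of_toWord_eq ha, hP]
  simp only [List.length_append, List.length_cons] at *
  omega

theorem norm_mul_mul_inv_lt {S : List (α × Bool)} (ha : a.toWord = P ++ (x, true) :: invRev P)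
    (hb : b.toWord = Q ++ (y, true) :: invRev Q) (hQ : Q = P ++ (x, false) :: S) :
    (a * b * a⁻¹).norm < b.norm := by
  have hmk : mk Q = mk P * (of x)⁻¹ * mk S := by
    rw [hQ, of, inv_mk, mul_mk, mul_mk, List.append_assoc]
    rfl
  have hconj : a * b * a⁻¹ = mk (P ++ S) * of y * (mk (P ++ S))⁻¹ := by
    rw [eq_conj_of_toWord_eq ha, eq_conj_of_toWord_eq hb, hmk, ← mul_mk]
    group
  have := norm_conj_of_le (mk (P ++ S)) y
  have := norm_mk_le (L₁ := P ++ S)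
  rw [hconj, norm_eq_of_toWord_eq hb, hQ]
  simp only [List.length_append, List.length_cons] at *
  omega

/-- Cancelling the common prefix of `P` and `Q` can only reach `x` or `y` through one of the two
excluded factorizations. -/
theorem isReduced_cons_toWord_inv_mul_append (hP : IsReduced ((x, true) :: invRev P))
    (hQ : IsReduced (Q ++ [(y, true)])) (hσ : ¬ ∃ R, P = Q ++ (y, true) :: R)
    (hσinv : ¬ ∃ S, Q = P ++ (x, false) :: S) :
    IsReduced ((x, true) :: ((mk P)⁻¹ * mk Q).toWord ++ [(y, true)]) := by
  induction P generalizing Q with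
  | nil =>
    rw [← one_eq_mk, inv_one, one_mul, (hQ.infix ⟨[], _, rfl⟩).toWord_mk]
    cases Q with
    | nil => simp
    | cons c Q =>
      refine isReduced_cons_cons.2 ⟨fun hc => ?_, hQ⟩
      by_contra hne
      exact hσinv ⟨Q, by simp [Prod.ext_iff, ← hc, Bool.eq_false_iff.2 (Ne.symm hne)]⟩
  | cons a P ih =>
    obtain ⟨a₁, a₂⟩ := a
    have hinv : invRev ((a₁, a₂) :: P) = invRev P ++ [(a₁, !a₂)] := by simp [FreeGroup.invRev]
    replace hP : IsReduced (((x, true) :: invRev P) ++ [(a₁, !a₂)]) := by rwa [hinv] at hP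
    cases Q with
    | nil =>
      have hay : IsReduced ([(a₁, !a₂)] ++ [(y, true)]) := by
        refine isReduced_cons_cons.2 ⟨fun h => ?_, .singleton⟩
        by_contra hne
        exact hσ ⟨P, by cases a₂ <;> simp_all⟩
      rw [← one_eq_mk, mul_one, inv_mk, hinv, (hP.infix ⟨[(x, true)], [], by simp⟩).toWord_mk]
      simpa using hP.append_overlap hay (by simp)
    | cons c Q =>
      by_cases hac : (a₁, a₂) = c
      · subst hac
        rw [show (mk ((a₁, a₂) :: P))⁻¹ * mk ((a₁, a₂) :: Q) = (mk P)⁻¹ * mk Q by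
          rw [← List.singleton_append, ← mul_mk, ← List.singleton_append (l := Q), ← mul_mk]
          group]
        refine ih (hP.infix ⟨[], [(a₁, !a₂)], by simp⟩) (hQ.infix ⟨[(a₁, a₂)], [], by simp⟩)
          (fun ⟨R, hR⟩ => hσ ⟨R, by rw [hR]; rfl⟩) (fun ⟨S, hS⟩ => hσinv ⟨S, by rw [hS]; rfl⟩)
      · have hac' : IsReduced ([(a₁, !a₂)] ++ [c]) := by
          refine isReduced_cons_cons.2 ⟨fun h => ?_, .singleton⟩
          obtain ⟨c₁, c₂⟩ := c
          cases a₂ <;> cases c₂ <;> simp_all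
        have hall := (hP.append_overlap hac' (by simp)).append_overlap hQ (by simp)
        have hD : IsReduced (invRev P ++ [(a₁, !a₂)] ++ c :: Q) :=
          hall.infix ⟨[(x, true)], [(y, true)], by simp⟩
        rw [inv_mk, hinv, mul_mk, hD.toWord_mk]
        simpa using hall

theorem toWord_mul_eq_append {g : FreeGroup α} {M : List (α × Bool)}
    (hg : g.toWord = M ++ (x, true) :: invRev P) (hb : b.toWord = Q ++ (y, true) :: invRev Q)
    (hσ : ¬ ∃ R, P = Q ++ (y, true) :: R) (hσinv : ¬ ∃ S, Q = P ++ (x, false) :: S) :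
    (g * b).toWord = M ++ (x, true) :: ((mk P)⁻¹ * mk Q).toWord ++ (y, true) :: invRev Q := by
  have hgred : IsReduced (M ++ [(x, true)] ++ invRev P) := by
    simpa [← hg] using isReduced_toWord (x := g)
  have hbred : IsReduced (Q ++ [(y, true)] ++ invRev Q) := by
    simpa [← hb] using isReduced_toWord (x := b)
  set D := ((mk P)⁻¹ * mk Q).toWord with hD
  have hxDy : IsReduced ([(x, true)] ++ (D ++ [(y, true)])) :=
    isReduced_cons_toWord_inv_mul_append (hgred.infix ⟨M, [], by simp⟩)
      (hbred.infix ⟨[], invRev Q, by simp⟩) hσ hσinv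
  have hMxDy : IsReduced (M ++ [(x, true)] ++ D ++ [(y, true)]) := by
    simpa using (hgred.infix ⟨[], invRev P, by simp⟩).append_overlap hxDy (by simp)
  have hall : IsReduced (M ++ [(x, true)] ++ D ++ [(y, true)] ++ invRev Q) :=
    hMxDy.append_overlap (hbred.infix ⟨Q, [], by simp⟩) (by simp)
  have hmk : mk (M ++ (x, true) :: (D ++ (y, true) :: invRev Q)) = g * b := by
    rw [mk_append_cons, mk_append_cons, hD, mk_toWord, ← inv_mk, ← mk_toWord (x := g),
      ← mk_toWord (x := b), hg, hb, mk_append_cons, mk_append_cons_invRev, inv_mk]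
    group
  rw [← hmk, IsReduced.toWord_mk (by simpa using hall)]
  simp

end ConjugateOfGenerator

/-- Neither `σ : (a, b) ↦ (b, b⁻¹ a b)` nor `σ⁻¹ : (a, b) ↦ (a b a⁻¹, a)` shortens the pair. -/
def HurwitzMinimal (a b : FreeGroup α) : Prop :=
  a.norm ≤ (b⁻¹ * a * b).norm ∧ b.norm ≤ (a * b * a⁻¹).norm

theorem exists_toWord_prod_eq {ts : List (FreeGroup α)}
    (hconj : ∀ t ∈ ts, ∃ P x, t.toWord = P ++ (x, true) :: invRev P)
    (hmin : ts.IsChain HurwitzMinimal) {b : FreeGroup α} (hb : ts.getLast? = some b)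
    {Q : List (α × Bool)} {y : α} (hbQ : b.toWord = Q ++ (y, true) :: invRev Q) :
    ∃ M, ts.prod.toWord = M ++ (y, true) :: invRev Q ∧
      ∀ t ∈ ts, ts.length + t.norm ≤ M.length + Q.length + 2 := by
  induction ts using List.reverseRecOn generalizing b Q y with
  | nil => simp at hb
  | append_singleton ts c ih =>
    obtain rfl : b = c := by simpa using hb.symm
    rcases hlast : ts.getLast? with _ | a
    · obtain rfl : ts = [] := List.getLast?_eq_none_iff.mp hlast
      refine ⟨Q, by simpa using hbQ, ?_⟩
      simp [norm_eq_of_toWord_eq hbQ]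
      omega
    have ha : a ∈ ts := List.mem_of_getLast? hlast
    obtain ⟨P, x, haP⟩ := hconj a (List.mem_append_left _ ha)
    obtain ⟨M, hM, hlen⟩ := ih (fun t ht => hconj t (List.mem_append_left _ ht))
      hmin.left_of_append hlast haP
    have hab : HurwitzMinimal a b := (List.isChain_append.mp hmin).2.2 a (by simpa) b (by simp)
    have hσ : ¬ ∃ R, P = Q ++ (y, true) :: R := fun ⟨_, hR⟩ =>
      (norm_inv_mul_mul_lt haP hbQ hR).not_ge hab.1
    have hσinv : ¬ ∃ S, Q = P ++ (x, false) :: S := fun ⟨_, hS⟩ =>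
      (norm_mul_mul_inv_lt haP hbQ hS).not_ge hab.2
    refine ⟨M ++ (x, true) :: ((mk P)⁻¹ * mk Q).toWord, ?_, ?_⟩
    · rw [List.prod_append, List.prod_singleton, toWord_mul_eq_append hM hbQ hσ hσinv]
    have hP := ((haP ▸ isReduced_toWord).infix (List.prefix_append _ _).isInfix).norm_mk
    have hQ := ((hbQ ▸ isReduced_toWord).infix (List.prefix_append _ _).isInfix).norm_mk
    have hPQ := norm_le_add_norm_inv_mul (mk P) (mk Q)
    have hlen_a := hlen a ha
    rw [norm_eq_of_toWord_eq haP] at hlen_a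
    intro t ht
    rcases List.mem_append.mp ht with ht | ht
    · have := hlen t ht
      simp only [List.length_append, List.length_cons, List.length_nil, norm] at *
      omega
    · obtain rfl : t = b := by simpa using ht
      rw [norm_eq_of_toWord_eq hbQ]
      simp only [List.length_append, List.length_cons, List.length_nil, norm] at *
      omega

theorem norm_list_prod_le (l : List (FreeGroup α)) : l.prod.norm ≤ (l.map norm).sum := by
  induction l with
  | nil => simp
  | cons a l ih =>
    rw [List.prod_cons, List.map_cons, List.sum_cons]
    exact (norm_mul_le _ _).trans (by omega)

theorem length_add_norm_le_norm_prod {ts : List (FreeGroup α)}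
    (hconj : ∀ t ∈ ts, ∃ s, IsConj (of s) t) (hmin : ts.IsChain HurwitzMinimal)
    {t : FreeGroup α} (ht : t ∈ ts) : ts.length + t.norm ≤ ts.prod.norm + 1 := by
  have hwords : ∀ t ∈ ts, ∃ P x, t.toWord = P ++ (x, true) :: invRev P := fun t ht =>
    let ⟨s, hs⟩ := hconj t ht
    let ⟨P, hP⟩ := exists_toWord_eq_of_isConj hs
    ⟨P, s, hP⟩
  obtain ⟨b, hb⟩ := Option.ne_none_iff_exists'.mp
    (List.getLast?_eq_none_iff.not.mpr (List.ne_nil_of_mem ht))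
  obtain ⟨Q, y, hbQ⟩ := hwords b (List.mem_of_getLast? hb)
  obtain ⟨M, hM, hlen⟩ := exists_toWord_prod_eq hwords hmin hb hbQ
  have := hlen t ht
  simp only [norm, hM, List.length_append, List.length_cons, invRev_length] at *
  omega

end FreeGroup

theorem Finset.sum_lt_sum_of_eq_off_pair {ι M : Type*} [Fintype ι] [DecidableEq ι]
    [AddCommMonoid M] [PartialOrder M] [IsOrderedCancelAddMonoid M] {f g : ι → M} {i j : ι}
    (hij : i ≠ j) (hrest : ∀ k, k ≠ i → k ≠ j → f k = g k) (hlt : f i + f j < g i + g j) :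
    ∑ k, f k < ∑ k, g k := by
  have hj : j ∈ Finset.univ.erase i := Finset.mem_erase.mpr ⟨hij.symm, Finset.mem_univ j⟩
  rw [← Finset.add_sum_erase _ _ (Finset.mem_univ i), ← Finset.add_sum_erase _ _ hj,
    ← Finset.add_sum_erase _ g (Finset.mem_univ i), ← Finset.add_sum_erase _ g hj,
    Finset.sum_congr rfl fun k hk => hrest k (Finset.ne_of_mem_erase (Finset.mem_of_mem_erase hk))
      (Finset.ne_of_mem_erase hk), ← add_assoc, ← add_assoc]
  exact add_lt_add_left hlt _

section Hurwitz

variable {G : Type*} [Group G] {n : ℕ}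

theorem finLo_ne_finHi (i : Fin (n - 1)) : finLo i ≠ finHi i := by
  simp [finLo, finHi, Fin.ext_iff]

def hurwitzMoveInv (i : Fin (n - 1)) (g : Fin n → G) : Fin n → G := fun k =>
  if k = finLo i then g (finLo i) * g (finHi i) * (g (finLo i))⁻¹
  else if k = finHi i then g (finLo i)
  else g k

theorem hurwitzMove_hurwitzMoveInv (i : Fin (n - 1)) (g : Fin n → G) :
    hurwitzMove i (hurwitzMoveInv i g) = g := by
  funext k
  have := finLo_ne_finHi i
  by_cases h₁ : k = finLo i
  · subst h₁
    simp [hurwitzMove, hurwitzMoveInv, this.symm]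
  by_cases h₂ : k = finHi i
  · subst h₂
    simp [hurwitzMove, hurwitzMoveInv, this.symm]
    group
  simp [hurwitzMove, hurwitzMoveInv, h₁, h₂]

variable (ℓ : G → ℕ) (i : Fin (n - 1)) (g : Fin n → G)

theorem sum_hurwitzMove_lt
    (h : ℓ ((g (finHi i))⁻¹ * g (finLo i) * g (finHi i)) < ℓ (g (finLo i))) :
    ∑ k, ℓ (hurwitzMove i g k) < ∑ k, ℓ (g k) := by
  have := finLo_ne_finHi i
  refine Finset.sum_lt_sum_of_eq_off_pair this (fun k h₁ h₂ => by simp [hurwitzMove, h₁, h₂]) ?_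
  simp only [hurwitzMove, this.symm, if_true, if_false]
  omega

theorem sum_hurwitzMoveInv_lt
    (h : ℓ (g (finLo i) * g (finHi i) * (g (finLo i))⁻¹) < ℓ (g (finHi i))) :
    ∑ k, ℓ (hurwitzMoveInv i g k) < ∑ k, ℓ (g k) := by
  have := finLo_ne_finHi i
  refine Finset.sum_lt_sum_of_eq_off_pair this
    (fun k h₁ h₂ => by simp [hurwitzMoveInv, h₁, h₂]) ?_
  simp only [hurwitzMoveInv, this.symm, if_true, if_false]
  omega

end Hurwitz

theorem exists_length_decreasing_move_general {m n : ℕ}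
    (u : Fin n → FreeGroup (Fin m)) (hu : ∀ k, ∃ s, u k = FreeGroup.of s)
    (t : Fin n → FreeGroup (Fin m))
    (ht : ∀ k, ∃ s : Fin m, IsConj (FreeGroup.of s) (t k))
    (hprod : (List.ofFn t).prod = (List.ofFn u).prod)
    (hlen : n < ∑ k, (t k).toWord.length)
    (ρ : BraidGroup n →* Equiv.Perm (Fin n → FreeGroup (Fin m)))
    (hρ : ∀ (i : Fin (n - 1)) (g : Fin n → FreeGroup (Fin m)),
      ρ (braidGen i) g = hurwitzMove i g) :
    ∃ (j : Fin (n - 1)) (ε : ℤ), (ε = 1 ∨ ε = -1) ∧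
      ∑ k, ((ρ (braidGen j ^ ε)) t k).toWord.length < ∑ k, (t k).toWord.length := by
  by_contra! hstuck
  have hρinv (j : Fin (n - 1)) : ρ (braidGen j ^ (-1 : ℤ)) t = hurwitzMoveInv j t := by
    rw [zpow_neg_one, _root_.map_inv ρ, Equiv.Perm.inv_eq_iff_eq, hρ, hurwitzMove_hurwitzMoveInv]
  have hmin : (List.ofFn t).IsChain FreeGroup.HurwitzMinimal := List.isChain_ofFn.mpr fun j hj =>
    let i : Fin (n - 1) := ⟨j, by omega⟩
    ⟨le_of_not_gt fun h => (hstuck i 1 (.inl rfl)).not_gt <| by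
        rw [zpow_one, hρ]; exact sum_hurwitzMove_lt FreeGroup.norm i t h,
      le_of_not_gt fun h => (hstuck i (-1) (.inr rfl)).not_gt <| by
        rw [hρinv]; exact sum_hurwitzMoveInv_lt FreeGroup.norm i t h⟩
  have hu_norm : (List.ofFn u).prod.norm ≤ n := by
    refine (FreeGroup.norm_list_prod_le _).trans ?_
    choose s hs using hu
    simp [List.map_ofFn, Function.comp_def, hs, FreeGroup.norm_of]
  have hshort (k : Fin n) : (t k).norm ≤ 1 := by
    have := FreeGroup.length_add_norm_le_norm_prod (by simpa using ht) hmin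
      (List.mem_ofFn.mpr ⟨k, rfl⟩)
    rw [hprod, List.length_ofFn] at this
    omega
  have := Finset.sum_le_sum fun k (_ : k ∈ Finset.univ) => hshort k
  simp only [Finset.sum_const, Finset.card_univ, Fintype.card_fin, smul_eq_mul, mul_one] at this
  exact hlen.not_ge this

/-- **Lemma (length decrease).** Let `u_1,…,u_n` be generators of the free group `F_m`
and let `t ∈ F_m^n` be a tuple, each entry conjugate to a generator, with
`t_1 ⋯ t_n = u_1 ⋯ u_n` and total reduced length `> n`.  Then for some index `j` and
some sign `ε ∈ {1, -1}`, the Hurwitz translate `σ_j^ε · t` (under the Hurwitz action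
given by `ρ` with `ρ(σ_i) = hurwitzMove i`) has strictly smaller total reduced length. -/
theorem exists_length_decreasing_move {m n : ℕ} (hn : 1 ≤ n)
    (u : Fin n → FreeGroup (Fin m)) (hu : ∀ k, ∃ s, u k = FreeGroup.of s)
    (t : Fin n → FreeGroup (Fin m))
    (ht : ∀ k, ∃ s : Fin m, IsConj (FreeGroup.of s) (t k))
    (hprod : (List.ofFn t).prod = (List.ofFn u).prod)
    (hlen : n < ∑ k, (t k).toWord.length)
    (ρ : BraidGroup n →* Equiv.Perm (Fin n → FreeGroup (Fin m)))
    (hρ : ∀ (i : Fin (n - 1)) (g : Fin n → FreeGroup (Fin m)),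
      ρ (braidGen i) g = hurwitzMove i g) :
    ∃ (j : Fin (n - 1)) (ε : ℤ), (ε = 1 ∨ ε = -1) ∧
      ∑ k, ((ρ (braidGen j ^ ε)) t k).toWord.length < ∑ k, (t k).toWord.length :=
  exists_length_decreasing_move_general u hu t ht hprod hlen ρ hρ
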